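/- The Shannon entropy of softmax(z/τ) is nondecreasing in the temperature τ > 0; equivalently, d/dτ H(softmax(z/τ)) ≥ 0 for all z ∈ ℝ^C and τ > 0. -/

import Mathlib

noncomputable def softmax {C : ℕ} (z : Fin C → ℝ) (j : Fin C) : ℝ :=
  Real.exp (z j) / ∑ k, Real.exp (z k)

noncomputable def shannonEntropy {C : ℕ} (p : Fin C → ℝ) : ℝ :=
  -∑ j, p j * Real.log (p j)

/-! In the inverse temperature `β = 1/τ`, with moments `Mₙ(β) = ∑ₖ exp(β zₖ) zₖⁿ`, the entropy of
the Gibbs distribution is `H(β) = log M₀ - β M₁ / M₀`. Since `Mₙ' = Mₙ₊₁`, the first terms cancel in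
`H'(β) = -β (M₀ M₂ - M₁²) / M₀²`, i.e. `-β` times the variance of `z`, which is nonnegative by
Cauchy–Schwarz. The chain rule through `β = τ⁻¹` turns this into `dH/dτ = (M₀ M₂ - M₁²) / (M₀² τ³)`. -/

open Real Finset

section Gibbs

variable {ι : Type*} [Fintype ι]

noncomputable def boltzmannMoment (z : ι → ℝ) (n : ℕ) (β : ℝ) : ℝ :=
  ∑ k, exp (β * z k) * z k ^ n

noncomputable def gibbsEntropy (z : ι → ℝ) (β : ℝ) : ℝ :=
  log (boltzmannMoment z 0 β) - β * boltzmannMoment z 1 β / boltzmannMoment z 0 β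

theorem hasDerivAt_boltzmannMoment (z : ι → ℝ) (n : ℕ) (β : ℝ) :
    HasDerivAt (boltzmannMoment z n) (boltzmannMoment z (n + 1) β) β := by
  unfold boltzmannMoment
  refine HasDerivAt.fun_sum fun k _ => ?_
  have hexp : HasDerivAt (fun b => exp (b * z k)) (exp (β * z k) * z k) β := by
    simpa using ((hasDerivAt_id β).mul_const (z k)).exp
  exact (hexp.mul_const (z k ^ n)).congr_deriv (by ring)

theorem boltzmannMoment_zero_pos [Nonempty ι] (z : ι → ℝ) (β : ℝ) :
    0 < boltzmannMoment z 0 β := by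
  unfold boltzmannMoment
  exact sum_pos (fun k _ => by positivity) univ_nonempty

theorem sq_boltzmannMoment_one_le (z : ι → ℝ) (β : ℝ) :
    boltzmannMoment z 1 β ^ 2 ≤ boltzmannMoment z 0 β * boltzmannMoment z 2 β :=
  sum_sq_le_sum_mul_sum_of_sq_le_mul univ (fun k _ => by positivity)
    (fun k _ => by positivity) (fun k _ => le_of_eq (by ring))

theorem hasDerivAt_gibbsEntropy [Nonempty ι] (z : ι → ℝ) (β : ℝ) :
    HasDerivAt (gibbsEntropy z)
      (-β * (boltzmannMoment z 0 β * boltzmannMoment z 2 β - boltzmannMoment z 1 β ^ 2)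
        / boltzmannMoment z 0 β ^ 2) β := by
  have hM₀ := (boltzmannMoment_zero_pos z β).ne'
  have h₀ := hasDerivAt_boltzmannMoment z 0 β
  refine HasDerivAt.congr_deriv (f := gibbsEntropy z)
    ((h₀.log hM₀).sub (((hasDerivAt_id β).mul (hasDerivAt_boltzmannMoment z 1 β)).div h₀ hM₀)) ?_
  simp only [zero_add, Pi.mul_apply, id, one_mul]
  field_simp
  ring

theorem hasDerivAt_gibbsEntropy_inv [Nonempty ι] (z : ι → ℝ) {τ : ℝ} (hτ : τ ≠ 0) :
    HasDerivAt (fun t => gibbsEntropy z t⁻¹)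
      ((boltzmannMoment z 0 τ⁻¹ * boltzmannMoment z 2 τ⁻¹ - boltzmannMoment z 1 τ⁻¹ ^ 2)
        / (boltzmannMoment z 0 τ⁻¹ ^ 2 * τ ^ 3)) τ := by
  refine ((hasDerivAt_gibbsEntropy z τ⁻¹).comp τ (hasDerivAt_inv hτ)).congr_deriv ?_
  field_simp

end Gibbs

theorem shannonEntropy_softmax {C : ℕ} [Nonempty (Fin C)] (x : Fin C → ℝ) :
    shannonEntropy (softmax x) = log (∑ k, exp (x k)) - ∑ j, softmax x j * x j := by
  have hS : 0 < ∑ k, exp (x k) := sum_pos (fun k _ => exp_pos _) univ_nonempty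
  have hsum : ∑ j, softmax x j = 1 := by
    simp only [softmax, ← sum_div, div_self hS.ne']
  have hlog : ∀ j, log (softmax x j) = x j - log (∑ k, exp (x k)) := fun j => by
    rw [softmax, log_div (exp_pos _).ne' hS.ne', log_exp]
  simp only [shannonEntropy, hlog, mul_sub, sum_sub_distrib, ← sum_mul, hsum]
  ring

theorem shannonEntropy_softmax_mul {C : ℕ} [Nonempty (Fin C)] (z : Fin C → ℝ) (β : ℝ) :
    shannonEntropy (softmax fun k => β * z k) = gibbsEntropy z β := by
  rw [shannonEntropy_softmax, gibbsEntropy]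
  simp only [softmax, boltzmannMoment, pow_zero, mul_one, pow_one]
  rw [mul_sum, sum_div, sub_right_inj]
  exact sum_congr rfl fun j _ => by ring

/-- The Shannon entropy of the temperature-scaled softmax is nondecreasing in τ:
its derivative with respect to τ is nonnegative for all τ > 0. -/
theorem entropy_softmax_deriv_nonneg {C : ℕ} (z : Fin C → ℝ) (τ : ℝ) (hτ : 0 < τ) :
    0 ≤ deriv (fun t : ℝ => shannonEntropy (fun j => softmax (fun k => z k / t) j)) τ := by
  rcases isEmpty_or_nonempty (Fin C) with _ | _
  · simp [shannonEntropy]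
  have hH : (fun t : ℝ => shannonEntropy (fun j => softmax (fun k => z k / t) j)) =
      fun t => gibbsEntropy z t⁻¹ := by
    funext t
    simp only [div_eq_inv_mul, shannonEntropy_softmax_mul]
  rw [hH, (hasDerivAt_gibbsEntropy_inv z hτ.ne').deriv]
  have hvar := sub_nonneg.mpr (sq_boltzmannMoment_one_le z τ⁻¹)
  positivity
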